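/- Exchangeability-based coverage with finite calibration: if V_1, …, V_{n+1} are exchangeable real-valued random variables with almost surely no ties, then P(V_{n+1} ≤ V_{(⌈(1−α)(n+1)⌉)}) ≥ 1 − α, where V_{(k)} is the k-th order statistic of V_1,…,V_n (interpreted as +∞ if ⌈(1−α)(n+1)⌉ > n). -/

import Mathlib

/-!
Let `R i = #{j | V j < V i}` be the strict rank of the `i`-th score. Exchangeability gives all
`R i` the same law. For every outcome at least `min k (n + 1)` indices satisfy `R i < k`: an
index outside that set with minimal score would have all strictly smaller scores inside it,
hence itself satisfy `R i < k`. Summing over `i` gives `(n + 1) • P (R (n + 1) < k) ≥ k` for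
`k ≤ n + 1`. Finally `R (n + 1) < k` says that fewer than `k` calibration scores lie strictly
below `V (n + 1)`, i.e. `V (n + 1) ≤ V_(k)`, and `k = ⌈(1 - α)(n + 1)⌉` makes
`k / (n + 1) ≥ 1 - α`.
-/

open MeasureTheory

/-- The `k`-th order statistic (0-indexed) of a finite real tuple. -/
noncomputable def orderStat {n : ℕ} (v : Fin n → ℝ) (k : Fin n) : ℝ :=
  v (Tuple.sort v k)

open Finset
open scoped ENNReal

section StrictRank

variable {ι α : Type*} [Fintype ι] [LinearOrder α]

theorem card_filter_comp_perm (σ : Equiv.Perm ι) (p : ι → Prop) [DecidablePred p] :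
    #{i | p (σ i)} = #{i | p i} := by
  simp only [card_filter]
  exact Equiv.sum_comp σ fun i => if p i then 1 else 0

def strictRank (x : ι → α) (i : ι) : ℕ := #{j | x j < x i}

theorem strictRank_comp_perm (x : ι → α) (σ : Equiv.Perm ι) (i : ι) :
    strictRank (x ∘ σ) i = strictRank x (σ i) :=
  card_filter_comp_perm σ (fun j => x j < x (σ i))

theorem min_le_card_strictRank_lt (x : ι → α) (k : ℕ) :
    min k (Fintype.card ι) ≤ #{i | strictRank x i < k} := by
  classical
  set S : Finset ι := {i | strictRank x i < k}
  by_contra! hS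
  obtain ⟨i, hi, hmin⟩ : ∃ i ∈ Sᶜ, ∀ j ∈ Sᶜ, x i ≤ x j :=
    Sᶜ.exists_min_image x (card_pos.1 <| by rw [card_compl]; omega)
  have hsub : ({j | x j < x i} : Finset ι) ⊆ S := fun j hj => by
    by_contra hjS
    exact (mem_filter.1 hj).2.not_ge (hmin j (mem_compl.2 hjS))
  have : strictRank x i < k := (card_le_card hsub).trans_lt (by omega)
  exact mem_compl.1 hi (mem_filter.2 ⟨mem_univ i, this⟩)

end StrictRank

theorem le_orderStat_iff {n : ℕ} (w : Fin n → ℝ) (t : ℝ) (a : Fin n) :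
    t ≤ orderStat w a ↔ #{m | w m < t} ≤ a := by
  rw [← card_filter_comp_perm (Tuple.sort w) (fun m => w m < t), ← not_lt, ← not_lt]
  exact not_congr (Tuple.lt_card_lt_iff_apply_lt_of_monotone (Tuple.monotone_sort w)).symm

theorem strictRank_last_le_iff_le_orderStat {n : ℕ} (u : Fin (n + 1) → ℝ) (a : Fin n) :
    strictRank u (Fin.last n) ≤ a ↔
      u (Fin.last n) ≤ orderStat (fun i => u i.castSucc) a := by
  rw [le_orderStat_iff]
  suffices strictRank u (Fin.last n) = #{m : Fin n | u m.castSucc < u (Fin.last n)} by rw [this]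
  simp only [strictRank, card_filter, Fin.sum_univ_castSucc, lt_irrefl, if_false, add_zero]

section Exchangeable

variable {Ω ι : Type*} [MeasurableSpace Ω] [Fintype ι] {P : Measure Ω} {V : ι → Ω → ℝ}

theorem measurableSet_strictRank_lt (i : ι) (k : ℕ) :
    MeasurableSet {x : ι → ℝ | strictRank x i < k} := by
  have : Measurable fun x : ι → ℝ => strictRank x i := by
    simp only [strictRank, card_filter]
    exact Finset.measurable_sum _ fun j _ => Measurable.ite
      (measurableSet_lt (measurable_pi_apply j) (measurable_pi_apply i))
      measurable_const measurable_const
  exact this (by trivial : MeasurableSet {m : ℕ | m < k})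

theorem measure_strictRank_lt_eq (hmeas : ∀ i, Measurable (V i))
    (hexch : ∀ σ : Equiv.Perm ι,
      Measure.map (fun ω i => V (σ i) ω) P = Measure.map (fun ω i => V i ω) P)
    (i j : ι) (k : ℕ) :
    P {ω | strictRank (fun l => V l ω) i < k} = P {ω | strictRank (fun l => V l ω) j < k} := by
  classical
  have h := congrArg (· {x | strictRank x j < k}) (hexch (Equiv.swap j i))
  rw [Measure.map_apply (by fun_prop) (measurableSet_strictRank_lt j k),
    Measure.map_apply (by fun_prop) (measurableSet_strictRank_lt j k)] at h
  have hswap : ∀ ω, strictRank (fun l => V (Equiv.swap j i l) ω) j =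
      strictRank (fun l => V l ω) i := fun ω => by
    rw [show (fun l => V (Equiv.swap j i l) ω) = (fun l => V l ω) ∘ Equiv.swap j i from rfl,
      strictRank_comp_perm, Equiv.swap_apply_left]
  simpa only [Set.preimage_ofPred_eq, hswap] using h

theorem min_le_sum_measure_strictRank_lt [IsProbabilityMeasure P]
    (hmeas : ∀ i, Measurable (V i)) (k : ℕ) :
    ((min k (Fintype.card ι) : ℕ) : ℝ≥0∞) ≤
      ∑ i, P {ω | strictRank (fun l => V l ω) i < k} := by
  have hA : ∀ i, MeasurableSet {ω | strictRank (fun l => V l ω) i < k} := fun i =>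
    measurable_pi_lambda _ hmeas (measurableSet_strictRank_lt i k)
  calc ((min k (Fintype.card ι) : ℕ) : ℝ≥0∞)
        = ∫⁻ _, ((min k (Fintype.card ι) : ℕ) : ℝ≥0∞) ∂P := by simp
    _ ≤ ∫⁻ ω, ∑ i, {ω | strictRank (fun l => V l ω) i < k}.indicator 1 ω ∂P :=
      lintegral_mono fun ω => by
        simp only [Set.indicator_apply, Set.mem_ofPred_eq, Pi.one_apply, sum_boole]
        exact_mod_cast min_le_card_strictRank_lt (fun l => V l ω) k
    _ = _ := by
      rw [lintegral_finsetSum _ fun i _ => measurable_one.indicator (hA i)]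
      simp only [lintegral_indicator_one (hA _)]

theorem div_card_le_measureReal_strictRank_lt [IsProbabilityMeasure P]
    (hmeas : ∀ i, Measurable (V i))
    (hexch : ∀ σ : Equiv.Perm ι,
      Measure.map (fun ω i => V (σ i) ω) P = Measure.map (fun ω i => V i ω) P)
    (i : ι) {k : ℕ} (hk : k ≤ Fintype.card ι) :
    (k : ℝ) / Fintype.card ι ≤ P.real {ω | strictRank (fun l => V l ω) i < k} := by
  have hsum := min_le_sum_measure_strictRank_lt (P := P) hmeas k
  rw [min_eq_left hk, Finset.sum_congr rfl fun j _ => measure_strictRank_lt_eq hmeas hexch j i k,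
    sum_const, card_univ, nsmul_eq_mul] at hsum
  refine div_le_of_le_mul₀ (Nat.cast_nonneg _) measureReal_nonneg ?_
  simpa [measureReal_def, ENNReal.toReal_mul, mul_comm] using
    ENNReal.toReal_mono (by finiteness) hsum

end Exchangeable

theorem stmt_8 {Ω : Type*} [MeasurableSpace Ω]
    (P : Measure Ω) [IsProbabilityMeasure P]
    (n : ℕ) (hn : 0 < n) (α : ℝ) (hα : α ∈ Set.Ioo (0:ℝ) 1)
    (V : Fin (n + 1) → Ω → ℝ) (hmeas : ∀ i, Measurable (V i))
    (hexch : ∀ σ : Equiv.Perm (Fin (n + 1)),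
      Measure.map (fun ω i => V (σ i) ω) P = Measure.map (fun ω i => V i ω) P) :
    1 - α ≤ (P {ω |
      if h : ⌈(1 - α) * (n + 1)⌉₊ ≤ n then
        V (Fin.last n) ω ≤
          orderStat (fun i : Fin n => V (Fin.castSucc i) ω)
            ⟨⌈(1 - α) * (n + 1)⌉₊ - 1, by omega⟩
      else True}).toReal := by
  obtain ⟨hα0, -⟩ := hα
  by_cases h : ⌈(1 - α) * (n + 1)⌉₊ ≤ n
  swap
  · simp only [dif_neg h, Set.ofPred_true, measure_univ, ENNReal.toReal_one]
    linarith
  simp only [dif_pos h]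
  calc 1 - α ≤ ⌈(1 - α) * (n + 1)⌉₊ / (n + 1) := by
        rw [le_div_iff₀ (by positivity)]; exact Nat.le_ceil _
    _ ≤ P.real {ω |
          strictRank (fun l => V l ω) (Fin.last n) < ⌈(1 - α) * (n + 1)⌉₊} := by
      simpa using div_card_le_measureReal_strictRank_lt hmeas hexch (Fin.last n)
        (by simp only [Fintype.card_fin]; omega)
    _ ≤ _ := ENNReal.toReal_mono (measure_ne_top _ _) <| measure_mono fun ω hω =>
      (strictRank_last_le_iff_le_orderStat (fun l => V l ω) _).1 (Nat.le_sub_one_of_lt hω)
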